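/- arXiv:1801.04509 — 6 statements merged into one kernel-verified Lean document; each statement's English description precedes it below -/
import Mathlib

section
/- Let ξ ∈ ℝⁿ with 0 ≤ ξ_j ≤ 1 for all j, and suppose ∑_{j=1}^n ξ_j = N + r₁ + r₂ where N is a nonnegative integer, 0 < r₂ ≤ r₁, and r₁ + r₂ < 1. Then ξ is majorized by the vector η = (1,...,1, r₁, r₂) (N ones followed by r₁ and r₂) if and only if ∑_{j=1}^{N+1} ξ*_j ≤ N + r₁, where ξ* is the nonincreasing rearrangement of ξ. -/
open scoped BigOperators

/-- Majorization for vectors of common length `L` (with nonnegative entries), stated via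
`k`-subset sums: the sum of the `k` largest entries of `x` equals the maximum of the sums of
`x` over subsets of cardinality `k`. -/
def Majorizes {L : ℕ} (x y : Fin L → ℝ) : Prop :=
  (∀ s : Finset (Fin L), ∃ t : Finset (Fin L), t.card = s.card ∧ ∑ j ∈ s, x j ≤ ∑ j ∈ t, y j)
  ∧ ∑ j, x j = ∑ j, y j

/-- Padding a vector of length `n` with zeros to length `L`. -/
def pad {n : ℕ} (L : ℕ) (x : Fin n → ℝ) : Fin L → ℝ :=
  fun j => if h : (j : ℕ) < n then x ⟨j, h⟩ else 0

/-!
For `k ≤ N` the first `k` entries of `η = (1, …, 1, r₁, r₂)` sum to `k`, and for `k ≥ N + 2` they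
sum to the whole total; since `0 ≤ ξ ≤ 1` and the totals agree, these bound every `k`-subset sum
of `ξ`. So only `k = N + 1` matters, and there every `N + 1` entries of `η` sum to at most
`N + r₁`: they contain at most `N` ones, and the others are `≤ r₁ ≤ 1`.
-/

open Finset

theorem Finset.sum_le_natCast_add_of_card_eq_succ {ι : Type*} [DecidableEq ι] {y : ι → ℝ}
    {A t : Finset ι} {N : ℕ} {c : ℝ} (hc : c ≤ 1) (hA : #A ≤ N) (hyA : ∀ j ∈ A, y j ≤ 1)
    (hyc : ∀ j ∉ A, y j ≤ c) (ht : #t = N + 1) :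
    ∑ j ∈ t, y j ≤ N + c := by
  have hinter : ∑ j ∈ t ∩ A, y j ≤ #(t ∩ A) := by
    simpa using sum_le_card_nsmul (t ∩ A) y 1 fun j hj => hyA j (mem_inter.1 hj).2
  have hsdiff : ∑ j ∈ t \ A, y j ≤ #(t \ A) * c := by
    simpa using sum_le_card_nsmul (t \ A) y c fun j hj => hyc j (mem_sdiff.1 hj).2
  have hcard : #(t ∩ A) + #(t \ A) = N + 1 := by rw [card_inter_add_card_sdiff, ht]
  have hinter_le : #(t ∩ A) ≤ N := (card_le_card inter_subset_right).trans hA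
  have hsdiff_pos : (1 : ℝ) ≤ #(t \ A) := by exact_mod_cast (by omega : 1 ≤ #(t \ A))
  have hcardR : (#(t ∩ A) : ℝ) + #(t \ A) = N + 1 := by exact_mod_cast hcard
  -- `#(t ∩ A) + #(t \ A) * c ≤ N + c` is `(#(t \ A) - 1) * (1 - c) ≥ 0`.
  rw [← sum_inter_add_sum_sdiff t A]
  nlinarith

section pad

variable {n L : ℕ}

theorem pad_of_le (x : Fin n → ℝ) {j : Fin L} (hj : n ≤ j) : pad L x j = 0 := by
  simp [pad, hj.not_gt]

theorem pad_nonneg {x : Fin n → ℝ} (hx : ∀ i, 0 ≤ x i) (j : Fin L) : 0 ≤ pad L x j := by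
  unfold pad; split_ifs <;> simp [hx]

theorem pad_le {x : Fin n → ℝ} {c : ℝ} (hc : 0 ≤ c) (hx : ∀ i, x i ≤ c) (j : Fin L) :
    pad L x j ≤ c := by
  unfold pad; split_ifs <;> simp [hx, hc]

theorem sum_map_castLEEmb_pad {k : ℕ} (hkn : k ≤ n) (hkL : k ≤ L) (x : Fin n → ℝ) :
    ∑ j ∈ univ.map (Fin.castLEEmb hkL), pad L x j = ∑ i : Fin k, x (Fin.castLE hkn i) := by
  rw [sum_map]
  exact sum_congr rfl fun i _ => by simp [pad, i.isLt.trans_le hkn]; rfl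

theorem sum_pad_of_forall_lt_mem (h : n ≤ L) (x : Fin n → ℝ) {t : Finset (Fin L)}
    (ht : ∀ j : Fin L, (j : ℕ) < n → j ∈ t) :
    ∑ j ∈ t, pad L x j = ∑ i, x i := by
  have hsub : univ.map (Fin.castLEEmb h) ⊆ t := by
    intro j hj
    obtain ⟨i, -, rfl⟩ := mem_map.1 hj
    exact ht _ i.isLt
  have hzero : ∀ j ∈ t, j ∉ univ.map (Fin.castLEEmb h) → pad L x j = 0 := fun j _ hj =>
    pad_of_le x (not_lt.1 fun hjn => hj (mem_map.2 ⟨⟨j, hjn⟩, mem_univ _, rfl⟩))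
  rw [← sum_subset hsub hzero, sum_map_castLEEmb_pad le_rfl h]
  rfl

theorem sum_pad (h : n ≤ L) (x : Fin n → ℝ) : ∑ j, pad L x j = ∑ i, x i :=
  sum_pad_of_forall_lt_mem h x fun j _ => mem_univ j

theorem exists_card_eq_sum_pad_eq (h : n ≤ L) (x : Fin n → ℝ) {s : Finset (Fin L)}
    (hs : n ≤ #s) : ∃ t : Finset (Fin L), #t = #s ∧ ∑ j ∈ t, pad L x j = ∑ i, x i := by
  obtain ⟨t, hsub, ht⟩ := exists_superset_card_eq (s := univ.map (Fin.castLEEmb h))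
    (by simpa using hs) (card_le_univ s)
  refine ⟨t, ht, sum_pad_of_forall_lt_mem h x fun j hj => hsub ?_⟩
  simpa using ⟨⟨j, hj⟩, rfl⟩

end pad

def topVector (N : ℕ) (r₁ r₂ : ℝ) : Fin (N + 2) → ℝ :=
  fun j => if (j : ℕ) < N then 1 else if (j : ℕ) = N then r₁ else r₂

section topVector

variable {N L : ℕ} {r₁ r₂ : ℝ}

theorem sum_topVector : ∑ j, topVector N r₁ r₂ j = N + r₁ + r₂ := by
  simp [Fin.sum_univ_castSucc, topVector, Fin.last]

theorem sum_topVector_castLE_of_le {k : ℕ} (hk : k ≤ N) :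
    ∑ i : Fin k, topVector N r₁ r₂ (Fin.castLE (hk.trans (Nat.le_add_right N 2)) i) = k := by
  simp [topVector, lt_of_lt_of_le _ hk]

theorem sum_topVector_castLE_succ :
    ∑ i : Fin (N + 1), topVector N r₁ r₂ (Fin.castLE (Nat.le_succ (N + 1)) i) = N + r₁ := by
  simp [Fin.sum_univ_castSucc, topVector, Fin.last, add_comm]

theorem pad_topVector_of_lt {j : Fin L} (hj : (j : ℕ) < N) : pad L (topVector N r₁ r₂) j = 1 := by
  simp [pad, topVector, hj, hj.trans (by omega : N < N + 2)]

theorem pad_topVector_le (hr₁ : 0 ≤ r₁) (hr : r₂ ≤ r₁) {j : Fin L} (hj : N ≤ (j : ℕ)) :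
    pad L (topVector N r₁ r₂) j ≤ r₁ := by
  have : ¬ (j : ℕ) < N := by omega
  unfold pad topVector
  split_ifs <;> simp_all

theorem sum_pad_topVector_le (hr₁ : 0 ≤ r₁) (hr : r₂ ≤ r₁) (hr₁1 : r₁ ≤ 1)
    {t : Finset (Fin L)} (ht : #t = N + 1) :
    ∑ j ∈ t, pad L (topVector N r₁ r₂) j ≤ N + r₁ :=
  sum_le_natCast_add_of_card_eq_succ (A := {j : Fin L | (j : ℕ) < N}) hr₁1
    (by rw [Fin.card_filter_val_lt]; exact min_le_right _ _)
    (fun j hj => (pad_topVector_of_lt (mem_filter.1 hj).2).le)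
    (fun j hj => pad_topVector_le hr₁ hr (by simpa using hj)) ht

theorem exists_card_eq_sum_le_sum_pad_topVector (hNL : N + 2 ≤ L) {x : Fin L → ℝ}
    (hx0 : ∀ j, 0 ≤ x j) (hx1 : ∀ j, x j ≤ 1) (hsum : ∑ j, x j = N + r₁ + r₂)
    (hN : ∀ s : Finset (Fin L), #s = N + 1 → ∑ j ∈ s, x j ≤ N + r₁) (s : Finset (Fin L)) :
    ∃ t : Finset (Fin L), #t = #s ∧ ∑ j ∈ s, x j ≤ ∑ j ∈ t, pad L (topVector N r₁ r₂) j := by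
  rcases lt_trichotomy #s (N + 1) with hs | hs | hs
  · refine ⟨univ.map (Fin.castLEEmb (by omega : #s ≤ L)), by simp, ?_⟩
    rw [sum_map_castLEEmb_pad (by omega : #s ≤ N + 2), sum_topVector_castLE_of_le (by omega)]
    simpa using sum_le_card_nsmul s x 1 fun j _ => hx1 j
  · refine ⟨univ.map (Fin.castLEEmb (by omega : N + 1 ≤ L)), by simp [hs], ?_⟩
    rw [sum_map_castLEEmb_pad (by omega : N + 1 ≤ N + 2), sum_topVector_castLE_succ]
    exact hN s hs
  · obtain ⟨t, ht, htsum⟩ :=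
      exists_card_eq_sum_pad_eq hNL (topVector N r₁ r₂) (by omega : N + 2 ≤ #s)
    refine ⟨t, ht, ?_⟩
    rw [htsum, sum_topVector, ← hsum]
    exact sum_le_univ_sum_of_nonneg fun j => hx0 j

end topVector

/-- The sum of the `N+1` largest entries of `ξ` is at most `N + r₁` iff every subset of
cardinality `N+1` has sum at most `N + r₁`; this expresses `∑_{j=1}^{N+1} ξ*_j ≤ N + r₁`. -/
theorem stmt1 {n N : ℕ} (ξ : Fin n → ℝ) (r₁ r₂ : ℝ)
    (hξ : ∀ j, 0 ≤ ξ j ∧ ξ j ≤ 1) (hr₂ : 0 < r₂) (hr : r₂ ≤ r₁) (hr1 : r₁ + r₂ < 1)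
    (hsum : ∑ j, ξ j = N + r₁ + r₂) :
    Majorizes (pad (max n (N + 2)) ξ)
        (pad (max n (N + 2))
          (fun j : Fin (N + 2) => if (j : ℕ) < N then (1 : ℝ) else if (j : ℕ) = N then r₁ else r₂))
      ↔ ∀ s : Finset (Fin (max n (N + 2))), s.card = N + 1 →
          ∑ j ∈ s, pad (max n (N + 2)) ξ j ≤ N + r₁ := by
  change Majorizes _ (pad _ (topVector N r₁ r₂)) ↔ _
  have hpadsum : ∑ j, pad (max n (N + 2)) ξ j = N + r₁ + r₂ := by
    rw [sum_pad (le_max_left _ _), hsum]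
  constructor
  · rintro ⟨hsub, -⟩ s hs
    obtain ⟨t, ht, hst⟩ := hsub s
    exact hst.trans (sum_pad_topVector_le (hr₂.le.trans hr) hr (by linarith) (ht.trans hs))
  · intro hN
    refine ⟨exists_card_eq_sum_le_sum_pad_topVector (le_max_right _ _)
      (pad_nonneg fun j => (hξ j).1) (pad_le zero_le_one fun j => (hξ j).2) hpadsum hN, ?_⟩
    rw [hpadsum, sum_pad (le_max_right _ _), sum_topVector]
end

section
/- If a sequence ξ with values in [0,1] satisfies the Kadison condition, then either ∑_j ξ_j = ∞ or ∑_j ξ_j ∈ ℕ. -/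
/-- The Kadison condition (threshold `1/2`): either the sum
`∑_{ξ_i ≤ 1/2} ξ_i + ∑_{ξ_i > 1/2} (1 - ξ_i)` is infinite (i.e. not summable, the terms being
nonnegative), or the difference `∑_{ξ_i ≤ 1/2} ξ_i - ∑_{ξ_i > 1/2} (1 - ξ_i)` is an integer. -/
def KadisonCondition (ξ : ℕ → ℝ) : Prop :=
  (¬ Summable (fun i => if ξ i ≤ 1 / 2 then ξ i else 1 - ξ i)) ∨
  ∃ k : ℤ, (∑' i, (if ξ i ≤ 1 / 2 then ξ i else 0))
      - (∑' i, (if ξ i ≤ 1 / 2 then (0 : ℝ) else 1 - ξ i)) = (k : ℝ)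

/-- If `ξ` (with values in `[0,1]`) satisfies the Kadison condition, then either
`∑ ξ_j = ∞` (i.e. `ξ` is not summable) or `∑ ξ_j` is a nonnegative integer. -/
theorem stmt4 (ξ : ℕ → ℝ) (hξ : ∀ i, 0 ≤ ξ i ∧ ξ i ≤ 1) (h : KadisonCondition ξ) :
    (¬ Summable ξ) ∨ ∃ m : ℕ, ∑' i, ξ i = (m : ℝ) := by
  by_cases hsum : Summable ξ
  · right
    set f : ℕ → ℝ := fun i => if ξ i ≤ 1 / 2 then ξ i else 0 with hf
    set g : ℕ → ℝ := fun i => if ξ i ≤ 1 / 2 then (0 : ℝ) else 1 - ξ i with hg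
    set b : ℕ → ℝ := fun i => if ξ i ≤ 1 / 2 then (0 : ℝ) else 1 with hb
    have hfv : ∀ i, f i = if ξ i ≤ 1 / 2 then ξ i else 0 := fun i => rfl
    have hgv : ∀ i, g i = if ξ i ≤ 1 / 2 then (0 : ℝ) else 1 - ξ i := fun i => rfl
    have hbv : ∀ i, b i = if ξ i ≤ 1 / 2 then (0 : ℝ) else 1 := fun i => rfl
    -- finitely many big indices
    have hfin : {i | ¬ ξ i ≤ 1 / 2}.Finite := by
      have h0 := hsum.tendsto_cofinite_zero
      have hmem := h0 (Metric.ball_mem_nhds (0 : ℝ) (by norm_num : (0:ℝ) < 1/2))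
      rw [Filter.mem_map, Filter.mem_cofinite] at hmem
      refine hmem.subset ?_
      intro i hi
      simp only [Set.mem_compl_iff, Set.mem_preimage, Metric.mem_ball, Real.dist_eq, sub_zero]
      intro habs
      exact hi (le_of_lt (abs_lt.mp habs).2)
    -- summability of pieces
    have hsf : Summable f := by
      refine hsum.of_nonneg_of_le (fun i => ?_) (fun i => ?_)
      · rw [hfv i]; by_cases hc : ξ i ≤ 1/2
        · rw [if_pos hc]; exact (hξ i).1
        · rw [if_neg hc]
      · rw [hfv i]; by_cases hc : ξ i ≤ 1/2
        · rw [if_pos hc]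
        · rw [if_neg hc]; exact (hξ i).1
    have hsg : Summable g := by
      apply summable_of_ne_finset_zero (s := hfin.toFinset)
      intro i hi
      simp only [Set.Finite.mem_toFinset, Set.mem_setOf_eq, not_not] at hi
      rw [hgv i, if_pos hi]
    have hsb : Summable b := by
      apply summable_of_ne_finset_zero (s := hfin.toFinset)
      intro i hi
      simp only [Set.Finite.mem_toFinset, Set.mem_setOf_eq, not_not] at hi
      rw [hbv i, if_pos hi]
    -- rule out first disjunct of Kadison condition
    have hK : ∃ k : ℤ, (∑' i, f i) - (∑' i, g i) = (k : ℝ) := by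
      rcases h with h1 | h2
      · exfalso
        apply h1
        have heq : (fun i => if ξ i ≤ 1 / 2 then ξ i else 1 - ξ i) = fun i => f i + g i := by
          funext i
          rw [hfv i, hgv i]
          by_cases hc : ξ i ≤ 1/2
          · rw [if_pos hc, if_pos hc, if_pos hc, add_zero]
          · rw [if_neg hc, if_neg hc, if_neg hc, zero_add]
        rw [heq]; exact hsf.add hsg
      · exact h2
    obtain ⟨k, hk⟩ := hK
    -- ξ = f + b - g
    have hxi : ξ = fun i => f i + b i - g i := by
      funext i
      rw [hfv i, hgv i, hbv i]
      by_cases hc : ξ i ≤ 1/2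
      · rw [if_pos hc, if_pos hc, if_pos hc]; ring
      · rw [if_neg hc, if_neg hc, if_neg hc]; ring
    have htsum : ∑' i, ξ i = (∑' i, f i) + (∑' i, b i) - (∑' i, g i) := by
      rw [hxi, Summable.tsum_sub (hsf.add hsb) hsg, Summable.tsum_add hsf hsb]
    -- ∑ b = card of big set
    have hbval : ∑' i, b i = (hfin.toFinset.card : ℝ) := by
      have h1 : ∑' i, b i = ∑ i ∈ hfin.toFinset, b i := by
        apply tsum_eq_sum
        intro i hi
        simp only [Set.Finite.mem_toFinset, Set.mem_setOf_eq, not_not] at hi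
        rw [hbv i, if_pos hi]
      have h2 : ∑ i ∈ hfin.toFinset, b i = ∑ i ∈ hfin.toFinset, (1 : ℝ) := by
        apply Finset.sum_congr rfl
        intro i hi
        simp only [Set.Finite.mem_toFinset, Set.mem_setOf_eq] at hi
        rw [hbv i, if_neg hi]
      rw [h1, h2, Finset.sum_const, nsmul_eq_mul, mul_one]
    have hval : ∑' i, ξ i = ((k + hfin.toFinset.card : ℤ) : ℝ) := by
      push_cast
      rw [htsum, hbval]
      linarith [hk]
    have hnn : (0:ℝ) ≤ ∑' i, ξ i := tsum_nonneg (fun i => (hξ i).1)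
    have hknn : 0 ≤ k + (hfin.toFinset.card : ℤ) := by
      rw [hval] at hnn
      exact_mod_cast hnn
    refine ⟨(k + hfin.toFinset.card).toNat, ?_⟩
    rw [hval]
    exact_mod_cast (Int.toNat_of_nonneg hknn).symm
  · exact Or.inl hsum
end

section
/- Let H be a separable complex Hilbert space with orthonormal basis {e_n}, let A be a bounded positive operator on H, and let ξ be a bounded sequence of nonnegative reals. If there is a partial isometry V with V*V equal to the range projection of A and ⟨VAV*e_j, e_j⟩ = ξ_j for all j, then there exist rank-one projections P_j such that A = ∑_j ξ_j P_j, the series converging in the strong operator topology. -/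
/-!
Put `B := √A ∘ V†`. Since `V†V = R_A` fixes the range of `√A`, we get `B B† = √A R_A √A = A`, while
`B† B = V A V†`, so `‖B eⱼ‖² = ξⱼ`. Expanding `B† x` in the basis gives
`A x = B (B† x) = ∑ⱼ ⟪B eⱼ, x⟫ B eⱼ = ∑ⱼ ξⱼ ⟪vⱼ, x⟫ vⱼ` with `vⱼ` the normalisation of `B eⱼ`.
-/

open scoped BigOperators ENNReal
open Filter Topology ContinuousLinearMap

variable {H : Type*} [NormedAddCommGroup H] [InnerProductSpace ℂ H]

/-- The rank-one operator `x ↦ ⟪v, x⟫ • v`. -/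
noncomputable def rankOneProj (v : H) : H →L[ℂ] H := (innerSL ℂ v).smulRight v

/-- A rank-one (orthogonal) projection: `v ⊗ v` for a unit vector `v`. -/
def IsRankOneProjection (P : H →L[ℂ] H) : Prop := ∃ v : H, ‖v‖ = 1 ∧ P = rankOneProj v

/-- The range projection of `A`: the orthogonal projection onto the closure of the range. -/
noncomputable def rangeProjection [CompleteSpace H] (A : H →L[ℂ] H) : H →L[ℂ] H :=
  haveI : CompleteSpace (LinearMap.range (A : H →ₗ[ℂ] H)).topologicalClosure :=
    IsClosed.completeSpace_coe (hs := (LinearMap.range (A : H →ₗ[ℂ] H)).isClosed_topologicalClosure)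
  (LinearMap.range (A : H →ₗ[ℂ] H)).topologicalClosure.subtypeL ∘L
    (Submodule.orthogonalProjectionOnto (LinearMap.range (A : H →ₗ[ℂ] H)).topologicalClosure)

open scoped InnerProduct

@[simp]
lemma rankOneProj_apply (v x : H) : rankOneProj v x = inner ℂ v x • v := rfl

lemma rankOneProj_smul (c : ℂ) (v : H) : rankOneProj (c • v) = (‖c‖ ^ 2 : ℝ) • rankOneProj v := by
  ext x
  simp only [rankOneProj_apply, inner_smul_left, smul_apply, smul_smul,
    RCLike.real_smul_eq_coe_smul (K := ℂ)]
  congr 1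
  rw [RCLike.ofReal_pow, ← RCLike.conj_mul]
  ring

lemma exists_isRankOneProjection_smul_eq_rankOneProj [Nontrivial H] (w : H) :
    ∃ P : H →L[ℂ] H, IsRankOneProjection P ∧ (‖w‖ ^ 2 : ℝ) • P = rankOneProj w := by
  by_cases hw : w = 0
  · obtain ⟨u, hu⟩ := exists_norm_eq H zero_le_one
    refine ⟨rankOneProj u, ⟨u, hu, rfl⟩, ?_⟩
    ext x
    simp [hw]
  · have hw' : (‖w‖ : ℂ) ≠ 0 := by simpa using hw
    refine ⟨rankOneProj ((‖w‖ : ℂ)⁻¹ • w), ⟨_, ?_, rfl⟩, ?_⟩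
    · rw [norm_smul, norm_inv, Complex.norm_real, norm_norm, inv_mul_cancel₀ (by simpa using hw)]
    · conv_rhs => rw [← smul_inv_smul₀ hw' w, rankOneProj_smul, Complex.norm_real, norm_norm]

section RangeProjection

variable [CompleteSpace H]

lemma closure_range_adjoint_comp_self {K : Type*} [NormedAddCommGroup K] [InnerProductSpace ℂ K]
    [CompleteSpace K] (T : H →L[ℂ] K) :
    (T† ∘L T).range.topologicalClosure = T†.range.topologicalClosure := by
  have hsa : (T† ∘L T)† = T† ∘L T := by rw [adjoint_comp, adjoint_adjoint]
  rw [← orthogonal_ker T, ← ker_adjoint_comp_self T, orthogonal_ker, hsa]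

lemma rangeProjection_apply_of_mem {A : H →L[ℂ] H} {x : H}
    (hx : x ∈ (LinearMap.range (A : H →ₗ[ℂ] H)).topologicalClosure) : rangeProjection A x = x :=
  Submodule.starProjection_eq_self_iff.mpr hx

lemma rangeProjection_adjoint_comp_self_comp_adjoint {K : Type*} [NormedAddCommGroup K]
    [InnerProductSpace ℂ K] [CompleteSpace K] (T : H →L[ℂ] K) :
    rangeProjection (T† ∘L T) ∘L T† = T† := by
  ext x
  refine rangeProjection_apply_of_mem ?_
  rw [closure_range_adjoint_comp_self]
  exact Submodule.le_topologicalClosure _ ⟨x, rfl⟩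

end RangeProjection

namespace ContinuousLinearMap

variable [CompleteSpace H] {A : H →L[ℂ] H}

lemma adjoint_sqrt (A : H →L[ℂ] H) : (CFC.sqrt A)† = CFC.sqrt A :=
  isSelfAdjoint_iff'.mp (CFC.sqrt_nonneg A).isSelfAdjoint

lemma IsPositive.sqrt_comp_sqrt (hA : A.IsPositive) : CFC.sqrt A ∘L CFC.sqrt A = A :=
  CFC.sqrt_mul_sqrt_self A ((nonneg_iff_isPositive A).mpr hA)

lemma IsPositive.sqrt_comp_adjoint_comp_adjoint (hA : A.IsPositive) {V : H →L[ℂ] H}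
    (hV : V† ∘L V = rangeProjection A) :
    (CFC.sqrt A ∘L V†) ∘L (CFC.sqrt A ∘L V†)† = A := by
  set S := CFC.sqrt A
  calc (S ∘L V†) ∘L (S ∘L V†)† = S ∘L ((V† ∘L V) ∘L S†) := by
        rw [adjoint_comp, adjoint_adjoint]; rfl
    _ = S ∘L (rangeProjection (S† ∘L S) ∘L S†) := by rw [hV, adjoint_sqrt, hA.sqrt_comp_sqrt]
    _ = A := by rw [rangeProjection_adjoint_comp_self_comp_adjoint, adjoint_sqrt, hA.sqrt_comp_sqrt]

lemma IsPositive.adjoint_comp_sqrt_comp_adjoint (hA : A.IsPositive) (V : H →L[ℂ] H) :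
    (CFC.sqrt A ∘L V†)† ∘L (CFC.sqrt A ∘L V†) = V ∘L A ∘L V† := by
  conv_rhs => rw [← hA.sqrt_comp_sqrt]
  rw [adjoint_comp, adjoint_adjoint, adjoint_sqrt]
  rfl

end ContinuousLinearMap

lemma HilbertBasis.hasSum_rankOneProj_apply [CompleteSpace H] {ι K : Type*} [NormedAddCommGroup K]
    [InnerProductSpace ℂ K] [CompleteSpace K] (e : HilbertBasis ι ℂ H) (B : H →L[ℂ] K) (x : K) :
    HasSum (fun j => rankOneProj (B (e j)) x) ((B ∘L B†) x) := by
  convert (e.hasSum_repr ((B†) x)).mapL B using 2 with j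
  · rw [rankOneProj_apply, map_smul, e.repr_apply_apply, adjoint_inner_right]
  · rfl

theorem stmt5_general [CompleteSpace H] (e : HilbertBasis ℕ ℂ H)
    (A : H →L[ℂ] H) (hA : A.IsPositive)
    (ξ : ℕ → ℝ)
    (V : H →L[ℂ] H) (hV : (adjoint V) ∘L V = rangeProjection A)
    (hdiag : ∀ j, (inner ℂ ((V ∘L A ∘L adjoint V) (e j)) (e j) : ℂ) = (ξ j : ℂ)) :
    ∃ P : ℕ → H →L[ℂ] H, (∀ j, IsRankOneProjection (P j)) ∧
      ∀ x : H, Filter.Tendsto (fun n => ∑ j ∈ Finset.range n, ξ j • P j x)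
        Filter.atTop (nhds (A x)) := by
  set B := CFC.sqrt A ∘L V†
  have hξ (j : ℕ) : ‖B (e j)‖ ^ 2 = ξ j := by
    have h := hdiag j
    rw [← hA.adjoint_comp_sqrt_comp_adjoint V, comp_apply, adjoint_inner_left,
      inner_self_eq_norm_sq_to_K] at h
    exact RCLike.ofReal_injective (K := ℂ) (by rw [RCLike.ofReal_pow]; exact h)
  have : Nontrivial H := nontrivial_of_ne _ _ (e.orthonormal.ne_zero 0)
  choose P hP hPB using fun j => exists_isRankOneProjection_smul_eq_rankOneProj (B (e j))
  refine ⟨P, hP, fun x => ?_⟩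
  have hsum := e.hasSum_rankOneProj_apply B x
  rw [hA.sqrt_comp_adjoint_comp_adjoint hV] at hsum
  simp only [← hPB, hξ, smul_apply] at hsum
  exact hsum.tendsto_sum_nat

theorem stmt5 [CompleteSpace H] (e : HilbertBasis ℕ ℂ H)
    (A : H →L[ℂ] H) (hA : A.IsPositive)
    (ξ : ℕ → ℝ) (hnonneg : ∀ j, 0 ≤ ξ j) (hbdd : ∃ C : ℝ, ∀ j, ξ j ≤ C)
    (V : H →L[ℂ] H) (hV : (adjoint V) ∘L V = rangeProjection A)
    (hdiag : ∀ j, (inner ℂ ((V ∘L A ∘L adjoint V) (e j)) (e j) : ℂ) = (ξ j : ℂ)) :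
    ∃ P : ℕ → H →L[ℂ] H, (∀ j, IsRankOneProjection (P j)) ∧
      ∀ x : H, Filter.Tendsto (fun n => ∑ j ∈ Finset.range n, ξ j • P j x)
        Filter.atTop (nhds (A x)) :=
  stmt5_general e A hA ξ V hV hdiag
end

section
/- Let η₁, η₂, ξ₁, ξ₂ > 0 with η₁ + η₂ = ξ₁ + ξ₂, and let 0 ≤ γ < 1, σ, τ, σ′ > 0 and τ′ < 0 be real numbers satisfying σ² + τ² + 2γστ = 1, ξ₁σ² + ξ₂σ′² = η₁, ξ₁τ² + ξ₂τ′² = η₂, and η₂σ² + η₁τ² = η₁η₂/ξ₁. Then σ′² + τ′² + 2γσ′τ′ = 1. -/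
theorem stmt14 (η₁ η₂ ξ₁ ξ₂ γ σ τ σ' τ' : ℝ)
    (hη₁ : 0 < η₁) (hη₂ : 0 < η₂) (hξ₁ : 0 < ξ₁) (hξ₂ : 0 < ξ₂)
    (htot : η₁ + η₂ = ξ₁ + ξ₂)
    (hγ0 : 0 ≤ γ) (hγ1 : γ < 1)
    (hσ : 0 < σ) (hτ : 0 < τ) (hσ' : 0 < σ') (hτ' : τ' < 0)
    (hnorm : σ ^ 2 + τ ^ 2 + 2 * γ * σ * τ = 1)
    (h1 : ξ₁ * σ ^ 2 + ξ₂ * σ' ^ 2 = η₁)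
    (h2 : ξ₁ * τ ^ 2 + ξ₂ * τ' ^ 2 = η₂)
    (h3 : η₂ * σ ^ 2 + η₁ * τ ^ 2 = η₁ * η₂ / ξ₁) :
    σ' ^ 2 + τ' ^ 2 + 2 * γ * σ' * τ' = 1 := by
  have h3' : ξ₁ * (η₂ * σ ^ 2 + η₁ * τ ^ 2) = η₁ * η₂ := by
    field_simp at h3; linarith
  have hsq : (ξ₂ * (σ' * τ')) ^ 2 = (ξ₁ * (σ * τ)) ^ 2 := by
    have e1 : ξ₂ * σ' ^ 2 = η₁ - ξ₁ * σ ^ 2 := by linarith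
    have e2 : ξ₂ * τ' ^ 2 = η₂ - ξ₁ * τ ^ 2 := by linarith
    linear_combination (η₂ - ξ₁ * τ ^ 2) * e1 + (ξ₂ * σ' ^ 2) * e2 - h3'
  have hfac : (ξ₂ * (σ' * τ') + ξ₁ * (σ * τ)) * (ξ₂ * (σ' * τ') - ξ₁ * (σ * τ)) = 0 := by
    nlinarith [hsq]
  have hneg : ξ₂ * (σ' * τ') - ξ₁ * (σ * τ) < 0 := by
    nlinarith [mul_pos hσ hτ, mul_pos hσ' (neg_pos.mpr hτ')]
  have key : ξ₂ * (σ' * τ') + ξ₁ * (σ * τ) = 0 := by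
    rcases mul_eq_zero.mp hfac with h | h
    · exact h
    · linarith
  have hξ₂' : ξ₂ ≠ 0 := ne_of_gt hξ₂
  have final : ξ₂ * (σ' ^ 2 + τ' ^ 2 + 2 * γ * σ' * τ') = ξ₂ * 1 := by
    linear_combination h1 + h2 + 2 * γ * key - ξ₁ * hnorm + htot
  exact mul_left_cancel₀ hξ₂' final
end

section
/- Let 0 ≤ B ≤ A be bounded operators on a separable Hilbert space, and suppose B = ∑_{j∈Λ} ξ_j P_j for rank-one projections P_j and scalars ξ_j > 1 (SOT convergence). Then tr((A−I)₊) ≥ ∑_{j∈Λ} (ξ_j − 1), where (A−I)₊ is the positive part of A−I. -/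
open scoped BigOperators ENNReal
open ContinuousLinearMap

variable {H : Type*} [NormedAddCommGroup H] [InnerProductSpace ℂ H]

/-!
Fix finitely many indices `s ⊆ Λ`, write `P_j = v_j ⊗ v_j`, and let `f` be an orthonormal basis
of `span {v_j | j ∈ s}`, which has at most `|s|` elements. Expanding each unit vector `v_j` in `f`
and using `B ≤ A ≤ T + 1`,
`∑_{j∈s} ξ_j = ∑_i ∑_{j∈s} ξ_j |⟪v_j, f_i⟫|² ≤ ∑_i ⟪B f_i, f_i⟫ ≤ ∑_i ⟪T f_i, f_i⟫ + |s|`.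
For positive `T = R²`, Parseval in the basis `e` and Bessel for `f` bound
`∑_i ⟪T f_i, f_i⟫ = ∑_i ‖R f_i‖²` by `∑_n ‖R e_n‖² = tr T`.
-/

open scoped InnerProductSpace

section General

variable {𝕜 E ι κ : Type*} [RCLike 𝕜] [NormedAddCommGroup E] [InnerProductSpace 𝕜 E]

lemma ContinuousLinearMap.re_inner_apply_self_le_of_le {B C : E →L[𝕜] E} (h : B ≤ C) (x : E) :
    RCLike.re ⟪B x, x⟫_𝕜 ≤ RCLike.re ⟪C x, x⟫_𝕜 := by
  have := ((le_def B C).mp h).re_inner_nonneg_left x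
  rwa [sub_apply, inner_sub_left, map_sub, sub_nonneg] at this

lemma Submodule.exists_orthonormal_sum_sq_norm_inner_eq (K : Submodule 𝕜 E)
    [FiniteDimensional 𝕜 K] :
    ∃ f : Fin (Module.finrank 𝕜 K) → E, Orthonormal 𝕜 f ∧
      ∀ x ∈ K, ∑ i, ‖⟪f i, x⟫_𝕜‖ ^ 2 = ‖x‖ ^ 2 := by
  let b := stdOrthonormalBasis 𝕜 K
  exact ⟨fun i => b i, b.orthonormal.comp_linearIsometry K.subtypeₗᵢ,
    fun x hx => b.sum_sq_norm_inner_right ⟨x, hx⟩⟩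

lemma HilbertBasis.hasSum_sq_norm_inner_right (b : HilbertBasis ι 𝕜 E) (x : E) :
    HasSum (fun i => ‖⟪b i, x⟫_𝕜‖ ^ 2) (‖x‖ ^ 2) := by
  simpa [← b.repr_apply_apply, b.repr.norm_map] using
    lp.hasSum_norm (p := 2) (by norm_num) (b.repr x)

lemma exists_orthonormal_sum_sub_one_le (s : Finset ι) {v : ι → E} (hv : ∀ j ∈ s, ‖v j‖ = 1)
    {ξ : ι → ℝ} {t : E → ℝ} (ht : ∀ x, ∑ j ∈ s, ξ j * ‖⟪v j, x⟫_𝕜‖ ^ 2 ≤ t x + ‖x‖ ^ 2) :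
    ∃ (m : ℕ) (f : Fin m → E), Orthonormal 𝕜 f ∧ ∑ j ∈ s, (ξ j - 1) ≤ ∑ i, t (f i) := by
  classical
  let K := Submodule.span 𝕜 (s.image v : Set E)
  obtain ⟨f, hf, hK⟩ := K.exists_orthonormal_sum_sq_norm_inner_eq
  refine ⟨_, f, hf, ?_⟩
  have hdim : (Module.finrank 𝕜 K : ℝ) ≤ s.card := by
    exact_mod_cast (finrank_span_finset_le_card _).trans Finset.card_image_le
  have hunit : ∀ j ∈ s, ∑ i, ‖⟪f i, v j⟫_𝕜‖ ^ 2 = 1 := fun j hj => by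
    rw [hK _ (Submodule.subset_span (by simpa using Finset.mem_image_of_mem v hj)), hv j hj,
      one_pow]
  calc ∑ j ∈ s, (ξ j - 1)
      = ∑ i, ∑ j ∈ s, ξ j * ‖⟪v j, f i⟫_𝕜‖ ^ 2 - s.card := by
        rw [Finset.sum_comm, Finset.sum_sub_distrib]
        congr 1
        · refine Finset.sum_congr rfl fun j hj => ?_
          simp_rw [norm_inner_symm (v j), ← Finset.mul_sum, hunit j hj, mul_one]
        · simp
    _ ≤ ∑ i, (t (f i) + 1) - Module.finrank 𝕜 K := by
        gcongr with i
        simpa [hf.1 i] using ht (f i)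
    _ = ∑ i, t (f i) := by simp [Finset.sum_add_distrib]

variable [CompleteSpace E]

lemma IsSelfAdjoint.ofReal_sum_sq_norm_apply_le_tsum [Fintype κ] (e : HilbertBasis ι 𝕜 E)
    {R : E →L[𝕜] E} (hR : IsSelfAdjoint R) {f : κ → E} (hf : Orthonormal 𝕜 f) :
    ENNReal.ofReal (∑ i, ‖R (f i)‖ ^ 2) ≤ ∑' n, ENNReal.ofReal (‖R (e n)‖ ^ 2) :=
  calc ENNReal.ofReal (∑ i, ‖R (f i)‖ ^ 2)
      = ∑ i, ∑' n, ENNReal.ofReal (‖⟪f i, R (e n)⟫_𝕜‖ ^ 2) := by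
        rw [ENNReal.ofReal_sum_of_nonneg fun i _ => by positivity]
        refine Finset.sum_congr rfl fun i _ => ?_
        have hp := e.hasSum_sq_norm_inner_right (R (f i))
        rw [← hp.tsum_eq, ENNReal.ofReal_tsum_of_nonneg (fun n => by positivity) hp.summable]
        refine tsum_congr fun n => ?_
        rw [norm_inner_symm, ← ContinuousLinearMap.coe_coe R, ← hR.isSymmetric]
    _ = ∑' n, ∑ i, ENNReal.ofReal (‖⟪f i, R (e n)⟫_𝕜‖ ^ 2) :=
        (Summable.tsum_finsetSum fun _ _ => ENNReal.summable).symm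
    _ ≤ ∑' n, ENNReal.ofReal (‖R (e n)‖ ^ 2) := by
        refine ENNReal.tsum_le_tsum fun n => ?_
        rw [← ENNReal.ofReal_sum_of_nonneg fun i _ => by positivity]
        exact ENNReal.ofReal_le_ofReal (hf.sum_inner_products_le (R (e n)))

end General

section Complex

variable {ι κ : Type*}

lemma re_inner_rankOneProj_apply_self (v x : H) :
    (⟪rankOneProj v x, x⟫_ℂ).re = ‖⟪v, x⟫_ℂ‖ ^ 2 := by
  rw [rankOneProj, smulRight_apply, innerSL_apply_apply, inner_smul_left, Complex.conj_mul']
  norm_cast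

lemma hasSum_re_inner_apply_self {ξ : ι → ℝ} {P : ι → H →L[ℂ] H} {B : H →L[ℂ] H} {x : H}
    (h : HasSum (fun j => ξ j • P j x) (B x)) :
    HasSum (fun j => ξ j * (⟪P j x, x⟫_ℂ).re) (⟪B x, x⟫_ℂ).re := by
  have hsymm : ∀ y, (⟪y, x⟫_ℂ).re = (⟪x, y⟫_ℂ).re := fun y => inner_re_symm (𝕜 := ℂ) y x
  simpa [hsymm, inner_smul_real_right] using Complex.hasSum_re (h.mapL (innerSL ℂ x))

variable [CompleteSpace H]

lemma ContinuousLinearMap.IsPositive.exists_isSelfAdjoint_re_inner_eq_norm_sq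
    {T : H →L[ℂ] H} (hT : T.IsPositive) :
    ∃ R : H →L[ℂ] H, IsSelfAdjoint R ∧ ∀ x, (⟪T x, x⟫_ℂ).re = ‖R x‖ ^ 2 := by
  obtain ⟨R, hR, -, rfl⟩ := CFC.exists_sqrt_of_isSelfAdjoint_of_quasispectrumRestricts
    hT.isSelfAdjoint hT.spectrumRestricts
  refine ⟨R, hR, fun x => ?_⟩
  rw [mul_apply_eq_comp, ← adjoint_inner_right, hR.adjoint_eq, ← RCLike.re_to_complex,
    inner_self_eq_norm_sq]

lemma ContinuousLinearMap.IsPositive.ofReal_sum_re_inner_le_tsum [Fintype κ]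
    (e : HilbertBasis ι ℂ H) {T : H →L[ℂ] H} (hT : T.IsPositive) {f : κ → H}
    (hf : Orthonormal ℂ f) :
    ENNReal.ofReal (∑ i, (⟪T (f i), f i⟫_ℂ).re)
      ≤ ∑' n, ENNReal.ofReal ((⟪T (e n), e n⟫_ℂ).re) := by
  obtain ⟨R, hR, hTR⟩ := hT.exists_isSelfAdjoint_re_inner_eq_norm_sq
  simpa only [hTR] using hR.ofReal_sum_sq_norm_apply_le_tsum e hf

end Complex

theorem stmt18_general [CompleteSpace H] (e : HilbertBasis ℕ ℂ H)
    (A B : H →L[ℂ] H) (hAB : (A - B).IsPositive)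
    (Λ : Set ℕ) (ξ : ℕ → ℝ) (hξ : ∀ j ∈ Λ, 1 < ξ j)
    (P : ℕ → H →L[ℂ] H) (hP : ∀ j ∈ Λ, IsRankOneProjection (P j))
    (hsum : ∀ x : H, HasSum (fun j : Λ => ξ j • P j x) (B x))
    (T S : H →L[ℂ] H) (hT : T.IsPositive) (hS : S.IsPositive)
    (hdecomp : A - 1 = T - S) :
    ∑' j : Λ, ENNReal.ofReal (ξ j - 1)
      ≤ ∑' n, ENNReal.ofReal ((inner ℂ (T (e n)) (e n) : ℂ).re) := by
  choose v hv hPv using fun j : Λ => hP j j.2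
  have hBT : B ≤ T + 1 := by
    have hTA : T = A - 1 + S := by rw [hdecomp, sub_add_cancel]
    rw [le_def, hTA, show A - 1 + S + 1 - B = (A - B) + S by abel]
    exact hAB.add hS
  have hform (s : Finset Λ) (x : H) :
      ∑ j ∈ s, ξ j * ‖⟪v j, x⟫_ℂ‖ ^ 2 ≤ (⟪T x, x⟫_ℂ).re + ‖x‖ ^ 2 := by
    have hB := hasSum_re_inner_apply_self (hsum x)
    simp only [hPv, re_inner_rankOneProj_apply_self] at hB
    calc ∑ j ∈ s, ξ j * ‖⟪v j, x⟫_ℂ‖ ^ 2 ≤ (⟪B x, x⟫_ℂ).re :=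
          sum_le_hasSum s (fun j _ => by have := hξ j j.2; positivity) hB
      _ ≤ (⟪(T + 1) x, x⟫_ℂ).re := re_inner_apply_self_le_of_le hBT x
      _ = (⟪T x, x⟫_ℂ).re + ‖x‖ ^ 2 := by simp; norm_cast
  rw [ENNReal.tsum_eq_iSup_sum]
  refine iSup_le fun s => ?_
  obtain ⟨m, f, hf, hle⟩ := exists_orthonormal_sum_sub_one_le s (fun j _ => hv j) (hform s)
  calc ∑ j ∈ s, ENNReal.ofReal (ξ j - 1) = ENNReal.ofReal (∑ j ∈ s, (ξ j - 1)) :=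
        (ENNReal.ofReal_sum_of_nonneg fun j _ => by linarith [hξ j j.2]).symm
    _ ≤ ENNReal.ofReal (∑ i, (⟪T (f i), f i⟫_ℂ).re) := ENNReal.ofReal_le_ofReal hle
    _ ≤ _ := hT.ofReal_sum_re_inner_le_tsum e hf

/-- Here the positive part `(A - I)₊` is encoded by its characteristic property:
`T = (A - I)₊` and `S = (A - I)₋` are the unique positive operators with `A - 1 = T - S` and
`T ∘ S = 0`. The trace is computed in the orthonormal basis `e`, with values in `[0, ∞]`. -/
theorem stmt18 [CompleteSpace H] (e : HilbertBasis ℕ ℂ H)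
    (A B : H →L[ℂ] H) (hB : B.IsPositive) (hAB : (A - B).IsPositive)
    (Λ : Set ℕ) (ξ : ℕ → ℝ) (hξ : ∀ j ∈ Λ, 1 < ξ j)
    (P : ℕ → H →L[ℂ] H) (hP : ∀ j ∈ Λ, IsRankOneProjection (P j))
    (hsum : ∀ x : H, HasSum (fun j : Λ => ξ j • P j x) (B x))
    (T S : H →L[ℂ] H) (hT : T.IsPositive) (hS : S.IsPositive)
    (hdecomp : A - 1 = T - S) (hTS : T ∘L S = 0) :
    ∑' j : Λ, ENNReal.ofReal (ξ j - 1)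
      ≤ ∑' n, ENNReal.ofReal ((inner ℂ (T (e n)) (e n) : ℂ).re) :=
  stmt18_general e A B hAB Λ ξ hξ P hP hsum T S hT hS hdecomp
end

section
/- Let A be a positive noncompact operator on a separable Hilbert space with essential norm ‖A‖_e, and let ξ be a sequence with 0 ≤ ξ_j ≤ ‖A‖_e and ξ_j < ‖A‖ for all j. Then there exist rank-one projections P_j such that ∑_{j=1}^∞ ξ_j P_j ≤ A, the series converging in the strong operator topology. -/
open scoped BigOperators
open Filter Topology ContinuousLinearMap

variable {H : Type*} [NormedAddCommGroup H] [InnerProductSpace ℂ H]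

/-- The essential norm of `A`: the distance from `A` to the compact operators,
i.e. the norm of the image of `A` in the Calkin algebra. -/
noncomputable def essNorm (A : H →L[ℂ] H) : ℝ :=
  sInf {r : ℝ | ∃ K : H →L[ℂ] H, IsCompactOperator K ∧ r = ‖A - K‖}

/-!
For `T ≥ 0` (Loewner order), Cauchy–Schwarz for the form of `T` gives
`(T u) ⊗ (T u) ≤ ⟪T u, u⟫ • T`, so `c • w ⊗ w ≤ T` for `w = T u / ‖T u‖` as soon as
`c ⟪T u, u⟫ ≤ ‖T u‖²`. The `P_j` are chosen greedily so that `T_n = A - ∑_{j<n} ξ_j P_j` stays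
positive and a compact perturbation of `A`; then `‖T_n‖_e = ‖A‖_e =: m`, and any finite-dimensional
subspace has unit vectors `u` in its complement with `‖T_n u‖` as close to `m` as we like.

If `‖A‖ ≤ m`, every `ξ_j` is `< m`, and such a `u` gives `ξ_j ⟪T_n u, u⟫ ≤ ξ_j ‖T_n u‖ ≤ ‖T_n u‖²`.
Otherwise some unit `x₀` has `⟪A x₀, x₀⟫ > m`, and `u = x₀ + s e` with `e ⊥ T_n x₀, T_n² x₀`
works even for `ξ_j = m`: the surplus `⟪T_n x₀, x₀⟫ - m` pays for `‖T_n e‖` falling short of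
`m`, and a large `s` makes the step lower `⟪T_n x₀, x₀⟫` by at most `d / 2^(n+1)`, so the
surplus is never used up.

The partial sums increase and stay below `A`, so they converge strongly to some `B ≤ A`.
-/

open InnerProductSpace RCLike

variable {T : H →L[ℂ] H}

lemma rankOneProj_eq_rankOne (v : H) : rankOneProj v = rankOne ℂ v v := rfl

lemma isCompactOperator_rankOne (v w : H) : IsCompactOperator (rankOne ℂ v w) :=
  (isCompactOperator_of_locallyCompactSpace_dom (innerSL ℂ w)).clm_comp (toSpanSingleton ℂ v)

lemma rankOne_ofReal_smul (r : ℝ) (v : H) :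
    rankOne ℂ ((r : ℂ) • v) ((r : ℂ) • v) = r ^ 2 • rankOne ℂ v v := by
  ext x
  simp only [rankOne_apply, inner_smul_left, Complex.conj_ofReal, smul_apply, smul_smul]
  rw [← Complex.coe_smul, smul_smul, Complex.ofReal_pow]
  ring_nf

lemma re_inner_rankOne_self_apply (v x : H) : re ⟪rankOne ℂ v v x, x⟫_ℂ = ‖⟪v, x⟫_ℂ‖ ^ 2 := by
  rw [rankOne_apply, inner_smul_left, RCLike.conj_mul]
  norm_cast

lemma re_inner_real_smul_apply (c : ℝ) (x : H) : re ⟪(c • T) x, x⟫_ℂ = c * re ⟪T x, x⟫_ℂ := by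
  rw [smul_apply, real_smul_eq_coe_smul (K := ℂ), inner_smul_left, conj_ofReal, re_ofReal_mul]

lemma isCompactOperator_sub_sub_smul_rankOne {A : H →L[ℂ] H} (h : IsCompactOperator (A - T))
    (c : ℝ) (w : H) : IsCompactOperator (A - (T - c • rankOne ℂ w w)) := by
  rw [sub_sub_eq_add_sub, add_sub_right_comm]
  exact h.add ((isCompactOperator_rankOne w w).smul c)

lemma essNorm_le_norm_sub (A : H →L[ℂ] H) {K : H →L[ℂ] H} (hK : IsCompactOperator K) :
    essNorm A ≤ ‖A - K‖ :=
  csInf_le ⟨0, fun _ ⟨_, _, hr⟩ => hr ▸ norm_nonneg _⟩ ⟨K, hK, rfl⟩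

lemma le_essNorm {A : H →L[ℂ] H} {r : ℝ} (h : ∀ K : H →L[ℂ] H, IsCompactOperator K → r ≤ ‖A - K‖) :
    r ≤ essNorm A :=
  le_csInf ⟨_, 0, isCompactOperator_zero, rfl⟩ fun _ ⟨K, hK, hr⟩ => hr ▸ h K hK

lemma essNorm_nonneg (A : H →L[ℂ] H) : 0 ≤ essNorm A :=
  le_essNorm fun _ _ => norm_nonneg _

lemma essNorm_le_of_isCompactOperator_sub {A T : H →L[ℂ] H} (h : IsCompactOperator (A - T)) :
    essNorm A ≤ essNorm T :=
  le_essNorm fun K hK => by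
    simpa [← sub_sub] using essNorm_le_norm_sub (K := A - T + K) A (h.add hK)

lemma essNorm_eq_of_isCompactOperator_sub {A T : H →L[ℂ] H} (h : IsCompactOperator (A - T)) :
    essNorm A = essNorm T := by
  refine (essNorm_le_of_isCompactOperator_sub h).antisymm (essNorm_le_of_isCompactOperator_sub ?_)
  simpa using h.neg

lemma exists_mem_orthogonal_lt_norm_apply (T : H →L[ℂ] H) (S : Submodule ℂ H)
    [FiniteDimensional ℂ S] {r : ℝ} (hr0 : 0 ≤ r) (hr : r < essNorm T) :
    ∃ e ∈ Sᗮ, ‖e‖ = 1 ∧ r < ‖T e‖ := by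
  by_contra! h
  have hTS : ‖T ∘L Sᗮ.subtypeL‖ ≤ r :=
    opNorm_le_of_unit_norm hr0 fun x hx => h x x.2 hx
  have hK : IsCompactOperator (T ∘L S.starProjection) :=
    (isCompactOperator_of_locallyCompactSpace_dom S.orthogonalProjectionOnto).clm_comp
      (T ∘L S.subtypeL)
  have hsplit : T - T ∘L S.starProjection = (T ∘L Sᗮ.subtypeL) ∘L Sᗮ.orthogonalProjectionOnto := by
    rw [comp_assoc, ← Submodule.starProjection, Submodule.starProjection_orthogonal, comp_sub,
      comp_id]
  refine hr.not_ge ?_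
  calc essNorm T ≤ ‖T - T ∘L S.starProjection‖ := essNorm_le_norm_sub T hK
    _ ≤ ‖T ∘L Sᗮ.subtypeL‖ * ‖Sᗮ.orthogonalProjectionOnto‖ := hsplit ▸ opNorm_comp_le _ _
    _ ≤ r * 1 := mul_le_mul hTS Sᗮ.orthogonalProjectionOnto_norm_le (opNorm_nonneg _) hr0
    _ = r := mul_one r

lemma re_inner_apply_le_of_le {S T : H →L[ℂ] H} (h : S ≤ T) (x : H) :
    re ⟪S x, x⟫_ℂ ≤ re ⟪T x, x⟫_ℂ := by
  have := h.re_inner_nonneg_left x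
  rwa [sub_apply, inner_sub_left, map_sub, sub_nonneg] at this

lemma nonneg_of_tendsto_apply {S : ℕ → H →L[ℂ] H} {B : H →L[ℂ] H} (hS : ∀ n, 0 ≤ S n)
    (h : ∀ x, Tendsto (fun n => S n x) atTop (𝓝 (B x))) : 0 ≤ B := by
  have hinner (x y : H) : Tendsto (fun n => ⟪S n x, y⟫_ℂ) atTop (𝓝 ⟪B x, y⟫_ℂ) :=
    (h x).inner tendsto_const_nhds
  refine (nonneg_iff_isPositive B).2 ⟨fun x y => ?_, fun x => ?_⟩
  · refine tendsto_nhds_unique (hinner x y) ?_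
    simp_rw [fun n => ((nonneg_iff_isPositive _).1 (hS n)).inner_left_eq_inner_right x y]
    exact tendsto_const_nhds.inner (h y)
  · exact ge_of_tendsto' ((continuous_re.tendsto _).comp (hinner x x))
      fun n => ((nonneg_iff_isPositive _).1 (hS n)).re_inner_nonneg_left x

lemma exists_norm_eq_one_lt_re_inner (hT : 0 ≤ T) {r : ℝ} (hr : 0 ≤ r) (h : r < ‖T‖) :
    ∃ x : H, ‖x‖ = 1 ∧ r < re ⟪T x, x⟫_ℂ := by
  rw [norm_eq_iSup_rayleighQuotient T ((nonneg_iff_isPositive T).1 hT).isSymmetric] at h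
  obtain ⟨x, hx⟩ := exists_lt_of_lt_ciSup h
  have hx0 : x ≠ 0 := by rintro rfl; simp at hx; linarith
  have hy := norm_smul_inv_norm (𝕜 := ℂ) hx0
  have hR : T.rayleighQuotient ((‖x‖⁻¹ : ℂ) • x) = T.rayleighQuotient x :=
    T.rayleigh_smul x (by simpa using hx0)
  refine ⟨(‖x‖⁻¹ : ℂ) • x, hy, ?_⟩
  rw [rayleighQuotient, rayleighQuotient, show ‖(‖x‖⁻¹ : ℂ) • x‖ = 1 from hy, one_pow, div_one,
    reApplyInnerSelf_apply] at hR
  rwa [hR, ← abs_of_nonneg (div_nonneg (((nonneg_iff_isPositive T).1 hT).2 x) (sq_nonneg _))]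

section Orthogonal

variable (hT : (T : H →ₗ[ℂ] H).IsSymmetric) {x e : H} (s : ℝ)
include hT

lemma inner_apply_eq_zero_of_inner_eq_zero (h : ⟪T x, e⟫_ℂ = 0) : ⟪T e, x⟫_ℂ = 0 := by
  have hsym : ⟪T e, x⟫_ℂ = ⟪e, T x⟫_ℂ := hT e x
  rw [hsym, inner_eq_zero_symm, h]

lemma inner_apply_add_smul_left (h : ⟪T x, e⟫_ℂ = 0) :
    ⟪T (x + (s : ℂ) • e), x⟫_ℂ = ⟪T x, x⟫_ℂ := by
  rw [map_add, map_smul, inner_add_left, inner_smul_left,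
    inner_apply_eq_zero_of_inner_eq_zero hT h, mul_zero, add_zero]

lemma re_inner_apply_add_smul (h : ⟪T x, e⟫_ℂ = 0) :
    re ⟪T (x + (s : ℂ) • e), x + (s : ℂ) • e⟫_ℂ = re ⟪T x, x⟫_ℂ + s ^ 2 * re ⟪T e, e⟫_ℂ := by
  rw [map_add, map_smul, inner_add_left, inner_add_right, inner_add_right, inner_smul_left,
    inner_smul_left, inner_smul_right, inner_smul_right, h,
    inner_apply_eq_zero_of_inner_eq_zero hT h]
  simp [sq, mul_assoc]

lemma norm_apply_add_smul_sq (h : ⟪T (T x), e⟫_ℂ = 0) :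
    ‖T (x + (s : ℂ) • e)‖ ^ 2 = ‖T x‖ ^ 2 + s ^ 2 * ‖T e‖ ^ 2 := by
  have hsym : ⟪T (T x), e⟫_ℂ = ⟪T x, T e⟫_ℂ := hT (T x) e
  have h' : ⟪T x, (s : ℂ) • T e⟫_ℂ = 0 := by rw [inner_smul_right, ← hsym, h, mul_zero]
  rw [map_add, map_smul, sq, norm_add_sq_eq_norm_sq_add_norm_sq_of_inner_eq_zero _ _ h', norm_smul,
    Complex.norm_real, Real.norm_eq_abs, ← sq_abs s]
  ring

end Orthogonal

lemma exists_essNorm_mul_re_inner_le_norm_apply_sq (hT : (T : H →ₗ[ℂ] H).IsSymmetric)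
    (hm : 0 < essNorm T) {x₀ : H} (hx₀ : ‖x₀‖ = 1) (hD : essNorm T < re ⟪T x₀, x₀⟫_ℂ) (K : ℝ) :
    ∃ u, ⟪T u, x₀⟫_ℂ = ⟪T x₀, x₀⟫_ℂ ∧ essNorm T * re ⟪T u, u⟫_ℂ ≤ ‖T u‖ ^ 2 ∧ K ≤ ‖T u‖ ^ 2 := by
  set m := essNorm T
  set D := re ⟪T x₀, x₀⟫_ℂ
  -- `u = x₀ + s e`: `s` is chosen so that `‖T u‖ ≥ K + 1`, then `ε` so that the surplus
  -- `D (D - m)` covers the loss `s² m ε` coming from `‖T e‖ > m - ε`.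
  set s : ℝ := 2 * (K + 1) / m
  set ε : ℝ := min (m / 2) (D * (D - m) / (m * (s ^ 2 + 1)))
  have hε : 0 < ε := lt_min (by linarith) (div_pos (by nlinarith) (by positivity))
  have hεm : ε ≤ m / 2 := min_le_left _ _
  have hεs : s ^ 2 * m * ε ≤ D * (D - m) := by
    have := (le_div_iff₀ (by positivity)).1 (min_le_right (m / 2) (D * (D - m) / (m * (s ^ 2 + 1))))
    nlinarith
  have : FiniteDimensional ℂ (Submodule.span ℂ {T x₀, T (T x₀)}) :=
    FiniteDimensional.span_of_finite ℂ (Set.toFinite _)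
  obtain ⟨e, he, he1, hTe⟩ := exists_mem_orthogonal_lt_norm_apply T
    (Submodule.span ℂ {T x₀, T (T x₀)}) (r := m - ε) (by linarith) (by linarith)
  have h1 : ⟪T x₀, e⟫_ℂ = 0 :=
    Submodule.inner_right_of_mem_orthogonal (Submodule.subset_span (by simp)) he
  have h2 : ⟪T (T x₀), e⟫_ℂ = 0 :=
    Submodule.inner_right_of_mem_orthogonal (Submodule.subset_span (by simp)) he
  refine ⟨x₀ + (s : ℂ) • e, inner_apply_add_smul_left hT s h1, ?_, ?_⟩
  · rw [re_inner_apply_add_smul hT s h1, norm_apply_add_smul_sq hT s h2]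
    have hDx₀ : D ≤ ‖T x₀‖ := by
      have := re_inner_le_norm (𝕜 := ℂ) (T x₀) x₀
      rwa [hx₀, mul_one] at this
    have hDe : re ⟪T e, e⟫_ℂ ≤ ‖T e‖ := by simpa [he1] using re_inner_le_norm (𝕜 := ℂ) (T e) e
    have hmTe : m * re ⟪T e, e⟫_ℂ ≤ ‖T e‖ ^ 2 + m * ε := by
      nlinarith [sq_nonneg (‖T e‖ - m), mul_pos hm (show 0 < ‖T e‖ - m + ε by linarith)]
    nlinarith [mul_le_mul_of_nonneg_left hmTe (sq_nonneg s)]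
  · rw [norm_apply_add_smul_sq hT s h2]
    have hs : s * (m / 2) = K + 1 := by simp only [s]; field_simp
    have : (K + 1) ^ 2 ≤ s ^ 2 * ‖T e‖ ^ 2 := by
      rw [← hs, mul_pow]
      exact mul_le_mul_of_nonneg_left (pow_le_pow_left₀ (by linarith) (by linarith) 2) (sq_nonneg s)
    nlinarith [sq_nonneg ‖T x₀‖]

lemma exists_seq_forall_sub_sum {E W : Type*} [AddCommGroup E] (p : W → Prop) (f : ℕ → W → E)
    (q : ℕ → E → Prop) {a : E} (h0 : q 0 a)
    (hstep : ∀ n x, q n x → ∃ w, p w ∧ q (n + 1) (x - f n w)) :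
    ∃ w : ℕ → W, (∀ n, p (w n)) ∧ ∀ n, q n (a - ∑ j ∈ Finset.range n, f j (w j)) := by
  choose g hgp hgq using hstep
  let x : (n : ℕ) → {y : E // q n y} := fun n =>
    Nat.rec ⟨a, h0⟩ (fun k xk => ⟨xk.1 - f k (g k xk.1 xk.2), hgq k _ xk.2⟩) n
  have hsum : ∀ n, (x n).1 = a - ∑ j ∈ Finset.range n, f j (g j (x j).1 (x j).2) := by
    intro n
    induction n with
    | zero => simp [x]
    | succ n ih => rw [Finset.sum_range_succ, ← sub_sub, ← ih]
  exact ⟨fun n => g n (x n).1 (x n).2, fun n => hgp n _ _, fun n => hsum n ▸ (x n).2⟩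

section Complete

variable [CompleteSpace H]

lemma essNorm_pos {A : H →L[ℂ] H} (hA : ¬ IsCompactOperator A) : 0 < essNorm A := by
  refine (essNorm_nonneg A).lt_of_ne' fun h => hA ?_
  refine isClosed_setOfPred_isCompactOperator.closure_subset
    (Metric.mem_closure_iff.2 fun ε hε => ?_)
  obtain ⟨_, ⟨K, hK, rfl⟩, hlt⟩ := exists_lt_of_csInf_lt (s := {r : ℝ | ∃ K : H →L[ℂ] H,
    IsCompactOperator K ∧ r = ‖A - K‖}) ⟨_, 0, isCompactOperator_zero, rfl⟩ (h.trans_lt hε)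
  exact ⟨K, hK, by rwa [dist_eq_norm]⟩

lemma inner_apply_eq_inner_sqrt (hT : 0 ≤ T) (x y : H) :
    ⟪T x, y⟫_ℂ = ⟪CFC.sqrt T x, CFC.sqrt T y⟫_ℂ := by
  conv_lhs => rw [← CFC.sqrt_mul_sqrt_self T hT]
  rw [mul_apply_eq_comp, ← adjoint_inner_right,
    (IsSelfAdjoint.of_nonneg (CFC.sqrt_nonneg T)).adjoint_eq]

lemma re_inner_apply_self_eq (hT : 0 ≤ T) (x : H) : re ⟪T x, x⟫_ℂ = ‖CFC.sqrt T x‖ ^ 2 := by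
  rw [inner_apply_eq_inner_sqrt hT, inner_self_eq_norm_sq]

lemma norm_inner_apply_sq_le (hT : 0 ≤ T) (x y : H) :
    ‖⟪T x, y⟫_ℂ‖ ^ 2 ≤ re ⟪T x, x⟫_ℂ * re ⟪T y, y⟫_ℂ := by
  rw [re_inner_apply_self_eq hT, re_inner_apply_self_eq hT, inner_apply_eq_inner_sqrt hT, ← mul_pow]
  exact pow_le_pow_left₀ (norm_nonneg _) (norm_inner_le_norm _ _) 2

lemma norm_apply_sq_le (hT : 0 ≤ T) (x : H) : ‖T x‖ ^ 2 ≤ ‖T‖ * re ⟪T x, x⟫_ℂ := by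
  have hS := IsSelfAdjoint.of_nonneg (CFC.sqrt_nonneg T)
  have hnorm : ‖T‖ = ‖CFC.sqrt T‖ ^ 2 := by
    rw [sq, ← CStarRing.norm_star_mul_self, hS.star_eq, CFC.sqrt_mul_sqrt_self T hT]
  have happly : T x = CFC.sqrt T (CFC.sqrt T x) := by
    conv_lhs => rw [← CFC.sqrt_mul_sqrt_self T hT]
    rfl
  rw [re_inner_apply_self_eq hT, hnorm, ← mul_pow, happly]
  exact pow_le_pow_left₀ (norm_nonneg _) (le_opNorm _ _) 2

lemma rankOne_apply_le_smul (hT : 0 ≤ T) (u : H) :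
    rankOne ℂ (T u) (T u) ≤ re ⟪T u, u⟫_ℂ • T := by
  have h1 : IsSelfAdjoint (re ⟪T u, u⟫_ℂ • T) := IsSelfAdjoint.of_nonneg (smul_nonneg
    (((nonneg_iff_isPositive T).1 hT).re_inner_nonneg_left u) hT)
  have h2 : IsSelfAdjoint (rankOne ℂ (T u) (T u)) :=
    isSelfAdjoint_iff_isSymmetric.2 (isSymmetric_rankOne_self _)
  rw [ContinuousLinearMap.le_def, isPositive_def']
  refine ⟨h1.sub h2, fun x => ?_⟩
  have hcs := norm_inner_apply_sq_le hT u x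
  rw [reApplyInnerSelf_apply, sub_apply, inner_sub_left, map_sub, re_inner_real_smul_apply,
    re_inner_rankOne_self_apply]
  linarith

lemma smul_rankOne_le (hT : 0 ≤ T) {u : H} {c : ℝ} (hc : 0 ≤ c)
    (h : c * re ⟪T u, u⟫_ℂ ≤ ‖T u‖ ^ 2) :
    c • rankOne ℂ ((‖T u‖⁻¹ : ℂ) • T u) ((‖T u‖⁻¹ : ℂ) • T u) ≤ T := by
  have hcoef : c * re ⟪T u, u⟫_ℂ / ‖T u‖ ^ 2 ≤ 1 := div_le_one_of_le₀ h (sq_nonneg _)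
  calc c • rankOne ℂ ((‖T u‖⁻¹ : ℂ) • T u) ((‖T u‖⁻¹ : ℂ) • T u)
      = (c * (‖T u‖⁻¹) ^ 2) • rankOne ℂ (T u) (T u) := by
        rw [← Complex.ofReal_inv, rankOne_ofReal_smul, smul_smul]
    _ ≤ (c * (‖T u‖⁻¹) ^ 2) • (re ⟪T u, u⟫_ℂ • T) :=
        smul_le_smul_of_nonneg_left (rankOne_apply_le_smul hT u) (by positivity)
    _ = (c * re ⟪T u, u⟫_ℂ / ‖T u‖ ^ 2) • T := by rw [smul_smul]; ring_nf
    _ ≤ (1 : ℝ) • T := smul_le_smul_of_nonneg_right hcoef hT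
    _ = T := one_smul ℝ T

lemma cauchySeq_apply_of_monotone {S : ℕ → H →L[ℂ] H} {A : H →L[ℂ] H} (hmono : Monotone S)
    (hle : ∀ n, S n ≤ A) (x : H) : CauchySeq (fun n => S n x) := by
  set F := fun n => re ⟪S n x, x⟫_ℂ
  have hFmono : Monotone F := fun n m h => re_inner_apply_le_of_le (hmono h) x
  obtain ⟨L, hL⟩ : ∃ L, Tendsto F atTop (𝓝 L) :=
    ⟨_, tendsto_atTop_ciSup hFmono
      ⟨_, Set.forall_mem_range.2 fun n => re_inner_apply_le_of_le (hle n) x⟩⟩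
  refine cauchySeq_of_le_tendsto_0' (fun n => √(‖A - S 0‖ * (L - F n))) (fun n m hnm => ?_) ?_
  · have hnm' : 0 ≤ S m - S n := sub_nonneg.2 (hmono hnm)
    have hnorm : ‖S m - S n‖ ≤ ‖A - S 0‖ :=
      CStarAlgebra.norm_le_norm_of_nonneg_of_le hnm' (sub_le_sub (hle m) (hmono n.zero_le))
    have hre : re ⟪(S m - S n) x, x⟫_ℂ ≤ L - F n := by
      rw [sub_apply, inner_sub_left, map_sub]
      linarith [hFmono.ge_of_tendsto hL m]
    rw [dist_comm, dist_eq_norm, ← sub_apply, ← Real.sqrt_sq (norm_nonneg _)]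
    refine Real.sqrt_le_sqrt ((norm_apply_sq_le hnm' x).trans ?_)
    exact mul_le_mul hnorm hre (((nonneg_iff_isPositive _).1 hnm').re_inner_nonneg_left x)
      (norm_nonneg _)
  · simpa using (((tendsto_const_nhds (x := L)).sub hL).const_mul ‖A - S 0‖).sqrt

lemma exists_tendsto_apply_of_monotone {S : ℕ → H →L[ℂ] H} {A : H →L[ℂ] H}
    (hmono : Monotone S) (hle : ∀ n, S n ≤ A) :
    ∃ B : H →L[ℂ] H, (∀ x, Tendsto (fun n => S n x) atTop (𝓝 (B x))) ∧ B ≤ A := by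
  choose B hB using fun x => cauchySeq_tendsto_of_complete (cauchySeq_apply_of_monotone hmono hle x)
  refine ⟨continuousLinearMapOfTendsto S (tendsto_pi_nhds.2 hB), hB, ?_⟩
  rw [← sub_nonneg]
  exact nonneg_of_tendsto_apply (fun n => sub_nonneg.2 (hle n)) fun x => (hB x).const_sub (A x)

lemma exists_smul_rankOne_le_of_lt_essNorm (hT : 0 ≤ T) {c : ℝ} (hc0 : 0 ≤ c)
    (hc : c < essNorm T) : ∃ w : H, ‖w‖ = 1 ∧ c • rankOne ℂ w w ≤ T := by
  obtain ⟨u, -, hu, hcu⟩ := exists_mem_orthogonal_lt_norm_apply T (⊥ : Submodule ℂ H) hc0 hc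
  refine ⟨_, norm_smul_inv_norm (norm_pos_iff.1 (hc0.trans_lt hcu)), smul_rankOne_le hT hc0 ?_⟩
  have hre := re_inner_le_norm (𝕜 := ℂ) (T u) u
  rw [hu, mul_one] at hre
  nlinarith [((nonneg_iff_isPositive T).1 hT).re_inner_nonneg_left u]

lemma exists_smul_rankOne_le_of_essNorm_lt_re_inner (hT : 0 ≤ T) (hm : 0 < essNorm T)
    {c δ : ℝ} (hc0 : 0 ≤ c) (hcm : c ≤ essNorm T) (hδ : 0 < δ) {x₀ : H} (hx₀ : ‖x₀‖ = 1)
    (hD : essNorm T < re ⟪T x₀, x₀⟫_ℂ) :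
    ∃ w : H, ‖w‖ = 1 ∧ c • rankOne ℂ w w ≤ T ∧ c * ‖⟪w, x₀⟫_ℂ‖ ^ 2 ≤ δ := by
  set z := ‖⟪T x₀, x₀⟫_ℂ‖
  obtain ⟨u, hux, hratio, hK⟩ :=
    exists_essNorm_mul_re_inner_le_norm_apply_sq ((nonneg_iff_isPositive T).1 hT).isSymmetric hm
      hx₀ hD (c * z ^ 2 / δ + 1)
  have hKpos : 0 < c * z ^ 2 / δ + 1 := by positivity
  have hTu : 0 < ‖T u‖ := by
    refine norm_pos_iff.2 fun h => ?_
    rw [h, norm_zero] at hK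
    linarith
  refine ⟨_, norm_smul_inv_norm (norm_pos_iff.1 hTu), smul_rankOne_le hT hc0 ?_, ?_⟩
  · exact (mul_le_mul_of_nonneg_right hcm
      (((nonneg_iff_isPositive T).1 hT).re_inner_nonneg_left u)).trans hratio
  · rw [inner_smul_left, hux, norm_mul, RCLike.norm_conj, norm_inv, RCLike.norm_ofReal, abs_norm,
      mul_pow, inv_pow, ← mul_assoc, mul_comm c, mul_assoc, inv_mul_le_iff₀ (by positivity)]
    rw [div_add_one hδ.ne', div_le_iff₀ hδ] at hK
    linarith

lemma exists_sum_smul_rankOne_le_of_lt_essNorm {A : H →L[ℂ] H} (hA : 0 ≤ A) {ξ : ℕ → ℝ}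
    (hξ : ∀ j, 0 ≤ ξ j ∧ ξ j < essNorm A) :
    ∃ w : ℕ → H, (∀ n, ‖w n‖ = 1) ∧
      ∀ n, ∑ j ∈ Finset.range n, ξ j • rankOne ℂ (w j) (w j) ≤ A := by
  have hstep (n : ℕ) (T : H →L[ℂ] H) (hT : 0 ≤ T ∧ IsCompactOperator (A - T)) :
      ∃ w : H, ‖w‖ = 1 ∧ 0 ≤ T - ξ n • rankOne ℂ w w ∧
        IsCompactOperator (A - (T - ξ n • rankOne ℂ w w)) := by
    obtain ⟨w, hw, hle⟩ := exists_smul_rankOne_le_of_lt_essNorm hT.1 (hξ n).1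
      (essNorm_eq_of_isCompactOperator_sub hT.2 ▸ (hξ n).2)
    exact ⟨w, hw, sub_nonneg.2 hle, isCompactOperator_sub_sub_smul_rankOne hT.2 _ w⟩
  obtain ⟨w, hw, hgood⟩ := exists_seq_forall_sub_sum _ _ _
    (⟨hA, by simpa using isCompactOperator_zero⟩ : 0 ≤ A ∧ IsCompactOperator (A - A)) hstep
  exact ⟨w, hw, fun n => sub_nonneg.1 (hgood n).1⟩

lemma exists_sum_smul_rankOne_le_of_essNorm_lt_re_inner {A : H →L[ℂ] H} (hA : 0 ≤ A)
    (hm : 0 < essNorm A) {ξ : ℕ → ℝ} (hξ : ∀ j, 0 ≤ ξ j ∧ ξ j ≤ essNorm A) {x₀ : H}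
    (hx₀ : ‖x₀‖ = 1) (hD : essNorm A < re ⟪A x₀, x₀⟫_ℂ) :
    ∃ w : ℕ → H, (∀ n, ‖w n‖ = 1) ∧
      ∀ n, ∑ j ∈ Finset.range n, ξ j • rankOne ℂ (w j) (w j) ≤ A := by
  set m := essNorm A
  set d := re ⟪A x₀, x₀⟫_ℂ - m
  have hd : 0 < d := sub_pos.2 hD
  have hstep (n : ℕ) (T : H →L[ℂ] H)
      (hT : 0 ≤ T ∧ IsCompactOperator (A - T) ∧ m + d / 2 ^ n ≤ re ⟪T x₀, x₀⟫_ℂ) :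
      ∃ w : H, ‖w‖ = 1 ∧ 0 ≤ T - ξ n • rankOne ℂ w w ∧
        IsCompactOperator (A - (T - ξ n • rankOne ℂ w w)) ∧
        m + d / 2 ^ (n + 1) ≤ re ⟪(T - ξ n • rankOne ℂ w w) x₀, x₀⟫_ℂ := by
    obtain ⟨hT, hK, hinv⟩ := hT
    have hmT : m = essNorm T := essNorm_eq_of_isCompactOperator_sub hK
    obtain ⟨w, hw, hle, hloss⟩ := exists_smul_rankOne_le_of_essNorm_lt_re_inner hT (hmT ▸ hm)
      (hξ n).1 (hmT ▸ (hξ n).2) (by positivity : 0 < d / 2 ^ (n + 1)) hx₀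
      (hmT ▸ lt_of_lt_of_le (lt_add_of_pos_right m (by positivity)) hinv)
    refine ⟨w, hw, sub_nonneg.2 hle, isCompactOperator_sub_sub_smul_rankOne hK _ w, ?_⟩
    rw [sub_apply, inner_sub_left, map_sub, re_inner_real_smul_apply, re_inner_rankOne_self_apply]
    have : d / 2 ^ n = d / 2 ^ (n + 1) + d / 2 ^ (n + 1) := by rw [pow_succ]; ring
    linarith
  obtain ⟨w, hw, hgood⟩ := exists_seq_forall_sub_sum _ _ _
    (⟨hA, by simpa using isCompactOperator_zero, by simp [d]⟩ : 0 ≤ A ∧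
      IsCompactOperator (A - A) ∧ m + d / 2 ^ 0 ≤ re ⟪A x₀, x₀⟫_ℂ) hstep
  exact ⟨w, hw, fun n => sub_nonneg.1 (hgood n).1⟩

end Complete

theorem stmt19 [CompleteSpace H] (A : H →L[ℂ] H) (hA : A.IsPositive)
    (hnc : ¬ IsCompactOperator (A : H →L[ℂ] H))
    (ξ : ℕ → ℝ) (hξ : ∀ j, 0 ≤ ξ j ∧ ξ j ≤ essNorm A ∧ ξ j < ‖A‖) :
    ∃ (P : ℕ → H →L[ℂ] H) (B : H →L[ℂ] H), (∀ j, IsRankOneProjection (P j)) ∧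
      (∀ x : H, Filter.Tendsto (fun n => ∑ j ∈ Finset.range n, ξ j • P j x)
        Filter.atTop (nhds (B x))) ∧
      (A - B).IsPositive := by
  have hA' : 0 ≤ A := (nonneg_iff_isPositive A).2 hA
  obtain ⟨w, hw, hle⟩ : ∃ w : ℕ → H, (∀ n, ‖w n‖ = 1) ∧
      ∀ n, ∑ j ∈ Finset.range n, ξ j • rankOne ℂ (w j) (w j) ≤ A := by
    rcases le_or_gt ‖A‖ (essNorm A) with hAm | hmA
    · exact exists_sum_smul_rankOne_le_of_lt_essNorm hA'
        fun j => ⟨(hξ j).1, (hξ j).2.2.trans_le hAm⟩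
    · obtain ⟨x₀, hx₀, hD⟩ := exists_norm_eq_one_lt_re_inner hA' (essNorm_nonneg A) hmA
      exact exists_sum_smul_rankOne_le_of_essNorm_lt_re_inner hA' (essNorm_pos hnc)
        (fun j => ⟨(hξ j).1, (hξ j).2.1⟩) hx₀ hD
  have hmono : Monotone fun n => ∑ j ∈ Finset.range n, ξ j • rankOne ℂ (w j) (w j) :=
    monotone_nat_of_le_succ fun n => by
      rw [Finset.sum_range_succ]
      exact le_add_of_nonneg_right
        (smul_nonneg (hξ n).1 ((nonneg_iff_isPositive _).2 (isPositive_rankOne_self _)))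
  obtain ⟨B, hB, hBA⟩ := exists_tendsto_apply_of_monotone hmono hle
  refine ⟨fun j => rankOneProj (w j), B, fun j => ⟨w j, hw j, rfl⟩, fun x => ?_, hBA⟩
  simpa only [sum_apply, smul_apply, rankOneProj_eq_rankOne] using hB x
end
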